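/- Let K be a field of characteristic zero, n ≥ 1, k ≥ 0, a ∈ K[x][t]^n, B_0, …, B_k ∈ K[x][t]^{n×n}, and let f ∈ K[x][[t]]^n be the unique solution of f = a + t·Σ_{i=0}^{k} B_i·Δ^i f. Let ε be a new variable, let λ_1, …, λ_n ∈ K \ {0} be pairwise distinct, and set E = ε·diag(λ_1, …, λ_n). Define ã(x,t) = a(x, t²), B̃_i(x,t) = t·B_i(x, t²) for i = 0, …, k−1, and B̃_k(x,t) = E + t·B_k(x, t²). Then the perturbed system f̃ = ã + t·Σ_{i=0}^{k} B̃_i·Δ^i f̃ has a unique solution f̃ ∈ K[x,ε][[t]]^n, and it satisfies [ε^0]f̃(x,t) = f(x, t²), i.e., extracting the ε-constant term of f̃ coefficientwise recovers the solution of the original system with t replaced by t². -/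

import Mathlib

/-!
Both systems are fixed-point equations `g = A + t·Φ(g)` in which coefficient `N` of the right-hand
side only involves coefficients of `g` below `N`; such an equation has exactly one solution,
obtained by solving for the coefficients one after the other. Setting `ε = 0` kills the
perturbation `E`, and `t ↦ t²` commutes with `Δ`, so both `[ε⁰]f̃` and `f(x, t²)` solve the same
strictly causal system `g = a(x,t²) + t·Σᵢ t·Bᵢ(x,t²)·Δⁱg`, hence they coincide.
-/

/-- The operator `Δ` on `L[x][[t]]` defined by `Δf = (f − f(0,t))/x`,
acting on each `t`-coefficient (a polynomial in `x`) as `divX`. -/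
noncomputable def seriesDelta {L : Type*} [CommRing L] (f : PowerSeries (Polynomial L)) :
    PowerSeries (Polynomial L) :=
  PowerSeries.mk fun N => (PowerSeries.coeff N f).divX

/-- Substitution `t ↦ t²` applied to a polynomial `q ∈ K[x][t]`, landing in
`K[x,ε][[t]]`, where `K[x,ε]` is represented as `(K[ε])[x]`, i.e. as
`Polynomial (Polynomial K)` with inner variable `ε` and outer variable `x`. -/
noncomputable def substTsq {K : Type*} [CommRing K] (q : Polynomial (Polynomial K)) :
    PowerSeries (Polynomial (Polynomial K)) :=
  PowerSeries.mk fun N =>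
    if 2 ∣ N then Polynomial.map (Polynomial.C : K →+* Polynomial K) (q.coeff (N / 2)) else 0

open PowerSeries Function

section Causal

variable {R ι : Type*} [Semiring R]

def IsStrictlyCausal (T : (ι → PowerSeries R) → ι → PowerSeries R) : Prop :=
  ∀ N g h, (∀ m < N, ∀ i, coeff m (g i) = coeff m (h i)) →
    ∀ i, coeff N (T g i) = coeff N (T h i)

variable {T : (ι → PowerSeries R) → ι → PowerSeries R}

theorem IsStrictlyCausal.coeff_iterate_eq (hT : IsStrictlyCausal T) (N : ℕ)
    (g h : ι → PowerSeries R) : ∀ m < N, ∀ i, coeff m (T^[N] g i) = coeff m (T^[N] h i) := by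
  induction N with
  | zero => exact fun m hm => absurd hm (Nat.not_lt_zero m)
  | succ N ih =>
    intro m hm
    rw [iterate_succ_apply', iterate_succ_apply']
    exact hT m _ _ fun m' hm' => ih m' (by omega)

theorem IsStrictlyCausal.eq_of_isFixedPt (hT : IsStrictlyCausal T) {g h : ι → PowerSeries R}
    (hg : IsFixedPt T g) (hh : IsFixedPt T h) : g = h := by
  have hcoeff : ∀ N i, coeff N (g i) = coeff N (h i) := by
    intro N
    induction N using Nat.strong_induction_on with
    | _ N ih =>
      rw [← hg, ← hh]
      exact hT N g h ih
  exact funext fun i => ext fun N => hcoeff N i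

theorem IsStrictlyCausal.existsUnique_isFixedPt (hT : IsStrictlyCausal T) :
    ∃! g, IsFixedPt T g := by
  -- coefficient `N` of the iterates `T^[M] 0` is stable from `M = N + 1` on
  let g : ι → PowerSeries R := fun i => mk fun N => coeff N (T^[N + 1] 0 i)
  have hg : IsFixedPt T g := by
    refine funext fun i => ext fun N => ?_
    rw [coeff_mk, iterate_succ_apply']
    refine hT N _ _ (fun m hm j => ?_) i
    rw [coeff_mk, show N = (m + 1) + (N - (m + 1)) by omega, iterate_add_apply T (m + 1)]
    exact hT.coeff_iterate_eq (m + 1) _ _ m m.lt_succ_self j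
  exact ⟨g, hg, fun h hh => hT.eq_of_isFixedPt hh hg⟩

end Causal

section Delta

variable {L L' : Type*} [CommRing L] [CommRing L']

theorem Polynomial.divX_map (ψ : L →+* L') (q : Polynomial L) :
    (q.map ψ).divX = q.divX.map ψ := by
  ext m
  simp [Polynomial.coeff_divX, Polynomial.coeff_map]

theorem coeff_seriesDelta (N : ℕ) (g : PowerSeries (Polynomial L)) :
    coeff N (seriesDelta g) = (coeff N g).divX :=
  coeff_mk _ _

theorem coeff_seriesDelta_iterate (i N : ℕ) (g : PowerSeries (Polynomial L)) :
    coeff N (seriesDelta^[i] g) = Polynomial.divX^[i] (coeff N g) :=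
  Semiconj.iterate_right (coeff_seriesDelta N) i g

theorem map_seriesDelta_iterate (ψ : L →+* L') (i : ℕ) (g : PowerSeries (Polynomial L)) :
    map (Polynomial.mapRingHom ψ) (seriesDelta^[i] g)
      = seriesDelta^[i] (map (Polynomial.mapRingHom ψ) g) := by
  have h : Semiconj (map (Polynomial.mapRingHom ψ) : PowerSeries (Polynomial L) → _)
      seriesDelta seriesDelta := by
    refine fun g => ext fun N => ?_
    simp only [coeff_seriesDelta, coeff_map, Polynomial.coe_mapRingHom, Polynomial.divX_map]
  exact h.iterate_right i g

theorem expand_seriesDelta_iterate (d : ℕ) (hd : d ≠ 0) (i : ℕ) (g : PowerSeries (Polynomial L)) :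
    expand d hd (seriesDelta^[i] g) = seriesDelta^[i] (expand d hd g) := by
  have h : Semiconj (expand d hd : PowerSeries (Polynomial L) → _) seriesDelta seriesDelta := by
    refine fun g => ext fun N => ?_
    simp only [coeff_seriesDelta, coeff_expand]
    split_ifs
    · rfl
    · exact Polynomial.divX_zero.symm
  exact h.iterate_right i g

end Delta

section System

variable {L L' ι : Type*} [CommRing L] [CommRing L'] [Fintype ι]

noncomputable def systemRhs (k : ℕ) (A : ι → PowerSeries (Polynomial L))
    (C : ℕ → ι → ι → PowerSeries (Polynomial L)) (g : ι → PowerSeries (Polynomial L)) :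
    ι → PowerSeries (Polynomial L) :=
  fun p => A p + X * ∑ i ∈ Finset.range (k + 1), ∑ l, C i p l * seriesDelta^[i] (g l)

theorem isStrictlyCausal_systemRhs (k : ℕ) (A : ι → PowerSeries (Polynomial L))
    (C : ℕ → ι → ι → PowerSeries (Polynomial L)) : IsStrictlyCausal (systemRhs k A C) := by
  rintro (_ | N) g h hgh p
  · simp only [systemRhs, map_add, coeff_zero_X_mul]
  · simp only [systemRhs, map_add, coeff_succ_X_mul]
    simp only [map_sum, coeff_mul, coeff_seriesDelta_iterate]
    refine congrArg _ (Finset.sum_congr rfl fun i _ => Finset.sum_congr rfl fun l _ =>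
      Finset.sum_congr rfl fun x hx => ?_)
    rw [hgh x.2 (Finset.Nat.antidiagonal.snd_lt hx) l]

theorem map_systemRhs (ψ : L →+* L') (k : ℕ) (A : ι → PowerSeries (Polynomial L))
    (C : ℕ → ι → ι → PowerSeries (Polynomial L)) (g : ι → PowerSeries (Polynomial L)) :
    (fun p => map (Polynomial.mapRingHom ψ) (systemRhs k A C g p))
      = systemRhs k (fun p => map (Polynomial.mapRingHom ψ) (A p))
          (fun i p l => map (Polynomial.mapRingHom ψ) (C i p l))
          (fun l => map (Polynomial.mapRingHom ψ) (g l)) := by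
  funext p
  simp only [systemRhs, map_add, map_mul, map_sum, map_X, map_seriesDelta_iterate]

theorem expand_systemRhs (d : ℕ) (hd : d ≠ 0) (k : ℕ) (A : ι → PowerSeries (Polynomial L))
    (C : ℕ → ι → ι → PowerSeries (Polynomial L)) (g : ι → PowerSeries (Polynomial L)) :
    (fun p => expand d hd (systemRhs k A C g p))
      = systemRhs k (fun p => expand d hd (A p)) (fun i p l => X ^ (d - 1) * expand d hd (C i p l))
          (fun l => expand d hd (g l)) := by
  funext p
  simp only [systemRhs, map_add, map_mul, map_sum, expand_X, expand_seriesDelta_iterate,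
    ← mul_pow_sub_one hd X, mul_assoc, Finset.mul_sum]

end System

theorem map_evalZero_substTsq {K : Type*} [CommRing K] (q : Polynomial (Polynomial K)) :
    map (Polynomial.mapRingHom (Polynomial.evalRingHom (0 : K))) (substTsq q)
      = expand 2 two_ne_zero (q : PowerSeries (Polynomial K)) := by
  ext N
  simp only [substTsq, coeff_map, coeff_mk, coeff_expand, Polynomial.coeff_coe]
  split_ifs
  · simp [Polynomial.map_map]
  · simp

theorem perturbed_system_recovers_original_general
    (K : Type*) [Field K] (n k : ℕ)
    (a : Fin n → Polynomial (Polynomial K))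
    (B : ℕ → Matrix (Fin n) (Fin n) (Polynomial (Polynomial K)))
    -- f is the (unique) solution of the original system f = a + t·Σᵢ Bᵢ·Δⁱf
    (f : Fin n → PowerSeries (Polynomial K))
    (hf : ∀ p, f p = (a p : PowerSeries (Polynomial K)) +
        PowerSeries.X * ∑ i ∈ Finset.range (k + 1), ∑ l,
          (B i p l : PowerSeries (Polynomial K)) * seriesDelta^[i] (f l))
    -- pairwise distinct nonzero λ₁,…,λₙ, defining E = ε·diag(λ₁,…,λₙ)
    (lam : Fin n → K) :
    -- the perturbed system f̃ = ã + t·Σᵢ B̃ᵢ·Δⁱf̃ has a unique solution f̃ in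
    -- K[x,ε][[t]]ⁿ, and [ε⁰]f̃(x,t) = f(x,t²)
    ∃ ft : Fin n → PowerSeries (Polynomial (Polynomial K)),
      (∀ p, ft p = substTsq (a p) +
        PowerSeries.X * ∑ i ∈ Finset.range (k + 1), ∑ l,
          ((if i = k ∧ p = l
              then PowerSeries.C (Polynomial.C (Polynomial.X * Polynomial.C (lam p)))
              else 0)
            + PowerSeries.X * substTsq (B i p l)) * seriesDelta^[i] (ft l)) ∧
      (∀ ft' : Fin n → PowerSeries (Polynomial (Polynomial K)),
        (∀ p, ft' p = substTsq (a p) +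
          PowerSeries.X * ∑ i ∈ Finset.range (k + 1), ∑ l,
            ((if i = k ∧ p = l
                then PowerSeries.C (Polynomial.C (Polynomial.X * Polynomial.C (lam p)))
                else 0)
              + PowerSeries.X * substTsq (B i p l)) * seriesDelta^[i] (ft' l)) →
        ft' = ft) ∧
      (∀ p, PowerSeries.map (Polynomial.mapRingHom (Polynomial.evalRingHom (0 : K))) (ft p)
        = PowerSeries.mk fun N =>
            if 2 ∣ N then PowerSeries.coeff (N / 2) (f p) else 0) := by
  set φ := Polynomial.mapRingHom (Polynomial.evalRingHom (0 : K))
  set E : ℕ → Fin n → Fin n → PowerSeries (Polynomial (Polynomial K)) := fun i p l =>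
    (if i = k ∧ p = l then C (Polynomial.C (Polynomial.X * Polynomial.C (lam p))) else 0)
      + X * substTsq (B i p l)
  obtain ⟨ft, hft, hunique⟩ :=
    (isStrictlyCausal_systemRhs k (fun p => substTsq (a p)) E).existsUnique_isFixedPt
  refine ⟨ft, fun p => (congrFun hft p).symm,
    fun ft' hft' => hunique ft' (funext fun p => (hft' p).symm), fun p => ?_⟩
  set T := systemRhs k (fun p => expand 2 two_ne_zero (a p : PowerSeries (Polynomial K)))
    fun i p l => X ^ (2 - 1) * expand 2 two_ne_zero (B i p l : PowerSeries (Polynomial K))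
  have hE : (fun i p l => map φ (E i p l)) = fun i p l => X ^ (2 - 1) * expand 2 two_ne_zero
      (B i p l : PowerSeries (Polynomial K)) := by
    funext i p l
    -- the perturbation carries the factor `ε`
    simp only [E]
    split_ifs <;> simp [φ, map_evalZero_substTsq]
  have hft_zero : IsFixedPt T fun p => map φ (ft p) := by
    have hT : T = systemRhs k (fun p => map φ (substTsq (a p))) fun i p l => map φ (E i p l) := by
      rw [hE, funext fun p => map_evalZero_substTsq (a p)]
    rw [IsFixedPt, hT, ← map_systemRhs, hft]
  have hf_expand : IsFixedPt T fun p => expand 2 two_ne_zero (f p) := by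
    simp only [IsFixedPt, T]
    rw [← expand_systemRhs]
    exact funext fun p => congrArg _ (hf p).symm
  rw [congrFun ((isStrictlyCausal_systemRhs _ _ _).eq_of_isFixedPt hft_zero hf_expand) p]
  exact ext fun N => by rw [coeff_expand, coeff_mk]

theorem perturbed_system_recovers_original
    (K : Type*) [Field K] [CharZero K] (n k : ℕ) (hn : 1 ≤ n)
    (a : Fin n → Polynomial (Polynomial K))
    (B : ℕ → Matrix (Fin n) (Fin n) (Polynomial (Polynomial K)))
    -- f is the (unique) solution of the original system f = a + t·Σᵢ Bᵢ·Δⁱf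
    (f : Fin n → PowerSeries (Polynomial K))
    (hf : ∀ p, f p = (a p : PowerSeries (Polynomial K)) +
        PowerSeries.X * ∑ i ∈ Finset.range (k + 1), ∑ l,
          (B i p l : PowerSeries (Polynomial K)) * seriesDelta^[i] (f l))
    -- pairwise distinct nonzero λ₁,…,λₙ, defining E = ε·diag(λ₁,…,λₙ)
    (lam : Fin n → K) (hlam0 : ∀ p, lam p ≠ 0) (hlam : Function.Injective lam) :
    -- the perturbed system f̃ = ã + t·Σᵢ B̃ᵢ·Δⁱf̃ has a unique solution f̃ in
    -- K[x,ε][[t]]ⁿ, and [ε⁰]f̃(x,t) = f(x,t²)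
    ∃ ft : Fin n → PowerSeries (Polynomial (Polynomial K)),
      (∀ p, ft p = substTsq (a p) +
        PowerSeries.X * ∑ i ∈ Finset.range (k + 1), ∑ l,
          ((if i = k ∧ p = l
              then PowerSeries.C (Polynomial.C (Polynomial.X * Polynomial.C (lam p)))
              else 0)
            + PowerSeries.X * substTsq (B i p l)) * seriesDelta^[i] (ft l)) ∧
      (∀ ft' : Fin n → PowerSeries (Polynomial (Polynomial K)),
        (∀ p, ft' p = substTsq (a p) +
          PowerSeries.X * ∑ i ∈ Finset.range (k + 1), ∑ l,
            ((if i = k ∧ p = l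
                then PowerSeries.C (Polynomial.C (Polynomial.X * Polynomial.C (lam p)))
                else 0)
              + PowerSeries.X * substTsq (B i p l)) * seriesDelta^[i] (ft' l)) →
        ft' = ft) ∧
      (∀ p, PowerSeries.map (Polynomial.mapRingHom (Polynomial.evalRingHom (0 : K))) (ft p)
        = PowerSeries.mk fun N =>
            if 2 ∣ N then PowerSeries.coeff (N / 2) (f p) else 0) :=
  perturbed_system_recovers_original_general K n k a B f hf lam
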